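/- Let V be a six-dimensional real vector space, let ξ¹, …, ξ⁶ be a basis of V*, and let μ = ξ¹ ∧ ξ² ∧ ξ³ + ξ⁴ ∧ ξ⁵ ∧ ξ⁶. Then the set of all ξ ∈ V* for which the 4-form ξ ∧ μ is decomposable (i.e., equals η¹ ∧ η² ∧ η³ ∧ η⁴ for some η¹, …, η⁴ ∈ V*) is exactly the set-theoretic union of the linear span of ξ¹, ξ², ξ³ and the linear span of ξ⁴, ξ⁵, ξ⁶. -/

import Mathlib

/-!
For a decomposable 4-form `ω`, a triple contraction `f₃ ⌋ f₂ ⌋ f₁ ⌋ ω` is a linear combination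
of the factors of `ω`, so its product with `ω` vanishes. Let `x` be the basis and `δ` its dual
basis. If `ω = ξ ∧ μ`, the triple contraction by `δ₁, δ₂, δ₄` is `δ₄(ξ) x₀`, while contracting
`x₀ ∧ ξ ∧ μ = x₀ ∧ ξ ∧ x₃ ∧ x₄ ∧ x₅` by `δ₀, δ₁, δ₃, δ₄, δ₅` leaves `δ₁(ξ)`; hence
`δ₁(ξ) δ₄(ξ) = 0`. Cyclic rotations of the two triples fix `μ`, so `δᵢ(ξ) δⱼ(ξ) = 0` whenever
`i < 3 ≤ j`, which puts `ξ` in one of the two spans. Conversely, for `ξ` in the first span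
`ξ ∧ μ = ξ ∧ x₃ ∧ x₄ ∧ x₅`, and symmetrically for the second.
-/
open Submodule

theorem Module.Basis.mem_span_image_or_mem_span_image_compl {ι R M : Type*} [Semiring R]
    [NoZeroDivisors R] [AddCommMonoid M] [Module R M] (b : Module.Basis ι R M) (s : Set ι) {v : M}
    (h : ∀ i ∈ s, ∀ j ∉ s, b.repr v i * b.repr v j = 0) :
    v ∈ span R (b '' s) ∨ v ∈ span R (b '' sᶜ) := by
  rw [b.mem_span_image, b.mem_span_image]
  by_contra! ⟨hs, hsc⟩
  obtain ⟨j, hj, hjs⟩ := Set.not_subset.mp hs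
  obtain ⟨i, hi, his⟩ := Set.not_subset.mp hsc
  exact mul_ne_zero (Finsupp.mem_support_iff.mp hi) (Finsupp.mem_support_iff.mp hj)
    (h i (not_not.mp his) j hjs)

theorem Matrix.range_cons_three {α : Type*} (a b c : α) : Set.range ![a, b, c] = {a, b, c} := by
  rw [range_cons, range_cons, range_cons, range_empty, Set.union_empty, Set.singleton_union,
    Set.singleton_union]

open ExteriorAlgebra

infixr:70 " ⌋ " => CliffordAlgebra.contractLeft

section

variable {R W : Type*} [CommRing R] [AddCommGroup W] [Module R W]

theorem ι_mul_ιMulti_eq_zero_of_mem_span {n : ℕ} (η : Fin n → W) {z : W}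
    (hz : z ∈ span R (Set.range η)) : ι R z * ιMulti R n η = 0 := by
  induction hz using span_induction with
  | mem w hw =>
    obtain ⟨i, rfl⟩ := hw
    exact ι_mul_prod_list η i
  | zero => simp
  | add u v _ _ hu hv => rw [map_add, add_mul, hu, hv, add_zero]
  | smul r u _ hu => rw [map_smul, smul_mul_assoc, hu, smul_zero]

theorem ι_mul_ι_mul_ι_eq_ιMulti (a b c : W) :
    ι R a * ι R b * ι R c = ιMulti R 3 ![a, b, c] := by
  simp [ιMulti_apply, mul_assoc]

theorem ι_mul_ι_mul_ι_rotate (a b c : W) : ι R c * ι R a * ι R b = ι R a * ι R b * ι R c := by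
  have hca : ι R c * ι R a = -(ι R a * ι R c) := eq_neg_of_add_eq_zero_left (ι_add_mul_swap c a)
  have hcb : ι R c * ι R b = -(ι R b * ι R c) := eq_neg_of_add_eq_zero_left (ι_add_mul_swap c b)
  rw [hca, neg_mul, mul_assoc, hcb, mul_neg, neg_neg, ← mul_assoc]

theorem ιMulti_four_apply (η : Fin 4 → W) :
    ιMulti R 4 η = ι R (η 0) * (ι R (η 1) * (ι R (η 2) * ι R (η 3))) := by
  simp [ιMulti_apply, Matrix.vecTail]

theorem contractLeft_contractLeft_contractLeft_ιMulti_mul_self (η : Fin 4 → W)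
    (f₁ f₂ f₃ : Module.Dual R W) : (f₃ ⌋ f₂ ⌋ f₁ ⌋ ιMulti R 4 η) * ιMulti R 4 η = 0 := by
  have h : ∀ k, ι R (η k) * ιMulti R 4 η = 0 := fun k =>
    ι_mul_ιMulti_eq_zero_of_mem_span η (subset_span ⟨k, rfl⟩)
  have h₀ := h 0
  have h₁ := h 1
  have h₂ := h 2
  have h₃ := h 3
  rw [ιMulti_four_apply] at h₀ h₁ h₂ h₃ ⊢
  simp only [CliffordAlgebra.contractLeft_ι_mul, CliffordAlgebra.contractLeft_ι, map_sub,
    map_smul, mul_sub, sub_mul, smul_mul_assoc, mul_smul_comm, CliffordAlgebra.contractLeft_one,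
    Algebra.algebraMap_eq_smul_one, one_mul, mul_zero, smul_zero, sub_zero, mul_assoc,
    h₀, h₁, h₂, h₃, sub_self]

variable (R) in
def tripleSum (x : Fin 6 → W) : ExteriorAlgebra R W :=
  ι R (x 0) * ι R (x 1) * ι R (x 2) + ι R (x 3) * ι R (x 4) * ι R (x 5)

variable {x : Fin 6 → W} {δ : Fin 6 → Module.Dual R W}

theorem ι_mul_tripleSum_eq_ιMulti_of_mem_span_left {ξ : W}
    (hξ : ξ ∈ span R {x 0, x 1, x 2}) :
    ι R ξ * tripleSum R x = ιMulti R 4 ![ξ, x 3, x 4, x 5] := by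
  rw [tripleSum, mul_add, ι_mul_ι_mul_ι_eq_ιMulti (x 0),
    ι_mul_ιMulti_eq_zero_of_mem_span _ (by rwa [Matrix.range_cons_three]), zero_add]
  simp [mul_assoc]

theorem ι_mul_tripleSum_eq_ιMulti_of_mem_span_right {ξ : W}
    (hξ : ξ ∈ span R {x 3, x 4, x 5}) :
    ι R ξ * tripleSum R x = ιMulti R 4 ![ξ, x 0, x 1, x 2] := by
  rw [tripleSum, mul_add, ι_mul_ι_mul_ι_eq_ιMulti (x 3),
    ι_mul_ιMulti_eq_zero_of_mem_span _ (by rwa [Matrix.range_cons_three]), add_zero]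
  simp [mul_assoc]

variable (R W) in
def tripleSumStabilizer : Submonoid (Equiv.Perm (Fin 6)) where
  carrier := {σ | ∀ x : Fin 6 → W, tripleSum R (x ∘ σ) = tripleSum R x}
  one_mem' _ := rfl
  mul_mem' {σ τ} hσ hτ x := by
    rw [Equiv.Perm.coe_mul, ← Function.comp_assoc, hτ, hσ]

theorem exists_mem_tripleSumStabilizer {i j : Fin 6} (hi : i < 3) (hj : 3 ≤ j) :
    ∃ σ ∈ tripleSumStabilizer R W, σ 1 = i ∧ σ 4 = j := by
  have h₁ : Equiv.swap 0 1 * Equiv.swap 0 2 ∈ tripleSumStabilizer R W := fun x => by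
    simp [tripleSum, Equiv.swap_apply_of_ne_of_ne, ι_mul_ι_mul_ι_rotate]
  have h₂ : Equiv.swap 3 4 * Equiv.swap 3 5 ∈ tripleSumStabilizer R W := fun x => by
    simp [tripleSum, Equiv.swap_apply_of_ne_of_ne, ι_mul_ι_mul_ι_rotate]
  obtain ⟨k, l, hk, hl⟩ : ∃ k l : Fin 3,
      ((Equiv.swap 0 1 * Equiv.swap 0 2) ^ (k : ℕ) * (Equiv.swap 3 4 * Equiv.swap 3 5) ^ (l : ℕ) :
        Equiv.Perm (Fin 6)) 1 = i ∧
      ((Equiv.swap 0 1 * Equiv.swap 0 2) ^ (k : ℕ) * (Equiv.swap 3 4 * Equiv.swap 3 5) ^ (l : ℕ) :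
        Equiv.Perm (Fin 6)) 4 = j := by
    revert i j; decide
  exact ⟨_, mul_mem (pow_mem h₁ k) (pow_mem h₂ l), hk, hl⟩

theorem contractLeft_one_two_four_ι_mul_tripleSum
    (hδ : ∀ i j, δ i (x j) = if i = j then 1 else 0) (ξ : W) :
    δ 4 ⌋ δ 2 ⌋ δ 1 ⌋ (ι R ξ * tripleSum R x) = δ 4 ξ • ι R (x 0) := by
  simp [tripleSum, CliffordAlgebra.contractLeft_ι_mul, hδ, mul_add, mul_assoc,
    Algebra.algebraMap_eq_smul_one]

theorem contractLeft_zero_one_three_four_five_ι_mul_ι_mul_tripleSum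
    (hδ : ∀ i j, δ i (x j) = if i = j then 1 else 0) (ξ : W) :
    δ 5 ⌋ δ 4 ⌋ δ 3 ⌋ δ 1 ⌋ δ 0 ⌋ (ι R (x 0) * (ι R ξ * tripleSum R x)) =
      algebraMap R _ (δ 1 ξ) := by
  simp [tripleSum, CliffordAlgebra.contractLeft_ι_mul, hδ, mul_sub, mul_add, mul_assoc,
    Algebra.algebraMap_eq_smul_one]

theorem coord_one_mul_coord_four_eq_zero (hδ : ∀ i j, δ i (x j) = if i = j then 1 else 0)
    {ξ : W} {η : Fin 4 → W}
    (h : ι R ξ * tripleSum R x = ιMulti R 4 η) : δ 1 ξ * δ 4 ξ = 0 := by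
  have key : algebraMap R (ExteriorAlgebra R W) (δ 4 ξ * δ 1 ξ) = 0 := calc
    _ = δ 4 ξ • (δ 5 ⌋ δ 4 ⌋ δ 3 ⌋ δ 1 ⌋ δ 0 ⌋ (ι R (x 0) * (ι R ξ * tripleSum R x))) := by
      rw [contractLeft_zero_one_three_four_five_ι_mul_ι_mul_tripleSum hδ, map_mul,
        Algebra.smul_def]
    _ = δ 5 ⌋ δ 4 ⌋ δ 3 ⌋ δ 1 ⌋ δ 0 ⌋ ((δ 4 ⌋ δ 2 ⌋ δ 1 ⌋ ιMulti R 4 η) * ιMulti R 4 η) := by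
      rw [← h, contractLeft_one_two_four_ι_mul_tripleSum hδ]
      simp only [map_smul, smul_mul_assoc]
    _ = 0 := by rw [contractLeft_contractLeft_contractLeft_ιMulti_mul_self]; simp only [map_zero]
  rwa [algebraMap_eq_zero_iff, mul_comm] at key

theorem coord_mul_coord_eq_zero (hδ : ∀ i j, δ i (x j) = if i = j then 1 else 0)
    {ξ : W} {η : Fin 4 → W}
    (h : ι R ξ * tripleSum R x = ιMulti R 4 η) {i j : Fin 6} (hi : i < 3) (hj : 3 ≤ j) :
    δ i ξ * δ j ξ = 0 := by
  obtain ⟨σ, hσ, rfl, rfl⟩ := exists_mem_tripleSumStabilizer (R := R) (W := W) hi hj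
  exact coord_one_mul_coord_four_eq_zero (x := x ∘ σ) (δ := δ ∘ σ)
    (fun i j => by simp [hδ, σ.injective.eq_iff]) (by rwa [hσ x])

end

theorem stmt7_general (V : Type*) [AddCommGroup V] [Module ℝ V]
    (b : Module.Basis (Fin 6) ℝ (Module.Dual ℝ V)) :
    {ξ : Module.Dual ℝ V |
      ∃ η : Fin 4 → Module.Dual ℝ V,
        ExteriorAlgebra.ι ℝ ξ *
            (ExteriorAlgebra.ι ℝ (b 0) * ExteriorAlgebra.ι ℝ (b 1) * ExteriorAlgebra.ι ℝ (b 2)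
              + ExteriorAlgebra.ι ℝ (b 3) * ExteriorAlgebra.ι ℝ (b 4) * ExteriorAlgebra.ι ℝ (b 5))
          = (List.ofFn fun i => ExteriorAlgebra.ι ℝ (η i)).prod}
      = ↑(Submodule.span ℝ {b 0, b 1, b 2}) ∪ ↑(Submodule.span ℝ {b 3, b 4, b 5}) := by
  have hcoord : ∀ i j, b.coord i (b j) = if i = j then 1 else 0 := fun i j => by
    simp [Finsupp.single_apply, eq_comm]
  have hleft : ({b 0, b 1, b 2} : Set _) = b '' {i | i < 3} := by
    rw [show {i : Fin 6 | i < 3} = {0, 1, 2} by ext i; fin_cases i <;> decide]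
    simp [Set.image_insert_eq]
  have hright : ({b 3, b 4, b 5} : Set _) = b '' {i | i < 3}ᶜ := by
    rw [show {i : Fin 6 | i < 3}ᶜ = {3, 4, 5} by ext i; fin_cases i <;> decide]
    simp [Set.image_insert_eq]
  ext ξ
  constructor
  · rintro ⟨η, hη⟩
    rw [Set.mem_union, SetLike.mem_coe, SetLike.mem_coe, hleft, hright]
    exact b.mem_span_image_or_mem_span_image_compl _ fun i hi j hj =>
      coord_mul_coord_eq_zero hcoord hη hi (not_lt.mp hj)
  · rintro (hξ | hξ)
    · exact ⟨_, ι_mul_tripleSum_eq_ιMulti_of_mem_span_left (x := b) hξ⟩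
    · exact ⟨_, ι_mul_tripleSum_eq_ιMulti_of_mem_span_right (x := b) hξ⟩

/-- In a six-dimensional real vector space `V` with basis `ξ¹, …, ξ⁶` of `V*`,
for `μ = ξ¹∧ξ²∧ξ³ + ξ⁴∧ξ⁵∧ξ⁶`, the set of `ξ ∈ V*` with `ξ ∧ μ` decomposable is the
union of the span of `ξ¹, ξ², ξ³` and the span of `ξ⁴, ξ⁵, ξ⁶`. (0-based indices.) -/
theorem stmt7 (V : Type*) [AddCommGroup V] [Module ℝ V] [FiniteDimensional ℝ V]
    (hdim : Module.finrank ℝ V = 6)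
    (b : Module.Basis (Fin 6) ℝ (Module.Dual ℝ V)) :
    {ξ : Module.Dual ℝ V |
      ∃ η : Fin 4 → Module.Dual ℝ V,
        ExteriorAlgebra.ι ℝ ξ *
            (ExteriorAlgebra.ι ℝ (b 0) * ExteriorAlgebra.ι ℝ (b 1) * ExteriorAlgebra.ι ℝ (b 2)
              + ExteriorAlgebra.ι ℝ (b 3) * ExteriorAlgebra.ι ℝ (b 4) * ExteriorAlgebra.ι ℝ (b 5))
          = (List.ofFn fun i => ExteriorAlgebra.ι ℝ (η i)).prod}
      = ↑(Submodule.span ℝ {b 0, b 1, b 2}) ∪ ↑(Submodule.span ℝ {b 3, b 4, b 5}) :=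
  stmt7_general V b
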